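/- Let (Wᵢ(s))_{i=1}^m be positive reals and (Wᵢ(s+1))_{i=1}^m nonnegative reals, and let J(s), J(s+1) be reals with λ₁ ≥ 0. If J(s+1) + ∑ᵢ λ₁·Wᵢ(s+1)²/(2Wᵢ(s)) ≤ J(s) + ∑ᵢ λ₁·Wᵢ(s)²/(2Wᵢ(s)), then J(s+1) + ∑ᵢ λ₁·Wᵢ(s+1) ≤ J(s) + ∑ᵢ λ₁·Wᵢ(s). -/

import Mathlib

/-! Majorization–minimization: for `a > 0` the quadratic `b ↦ b ^ 2 / (2 * a) + a / 2` lies above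
`b ↦ b` and touches it at `b = a`, so a decrease of the quadratic surrogate forces a decrease of the
original objective. -/

theorem sub_sq_div_two_mul_le {K : Type*} [Field K] [LinearOrder K] [IsStrictOrderedRing K]
    {a : K} (b : K) (ha : 0 < a) : b - b ^ 2 / (2 * a) ≤ a - a ^ 2 / (2 * a) := by
  have gap : a - a ^ 2 / (2 * a) - (b - b ^ 2 / (2 * a)) = (a - b) ^ 2 / (2 * a) := by
    field_simp
    ring
  have : 0 ≤ (a - b) ^ 2 / (2 * a) := by positivity
  linarith

theorem mul_sub_mul_sq_div_two_mul_le {K : Type*} [Field K] [LinearOrder K]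
    [IsStrictOrderedRing K] {a c : K} (b : K) (ha : 0 < a) (hc : 0 ≤ c) :
    c * b - c * b ^ 2 / (2 * a) ≤ c * a - c * a ^ 2 / (2 * a) := by
  simpa only [mul_sub, mul_div_assoc] using
    mul_le_mul_of_nonneg_left (sub_sq_div_two_mul_le b ha) hc

theorem stmt_4_general (m : ℕ) (Ws Ws1 : Fin m → ℝ) (Js Js1 lam1 : ℝ)
    (hWs : ∀ i, 0 < Ws i) (hlam : 0 ≤ lam1)
    (h : Js1 + ∑ i, lam1 * (Ws1 i) ^ 2 / (2 * Ws i)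
        ≤ Js + ∑ i, lam1 * (Ws i) ^ 2 / (2 * Ws i)) :
    Js1 + ∑ i, lam1 * Ws1 i ≤ Js + ∑ i, lam1 * Ws i := by
  have key : ∑ i, (lam1 * Ws1 i - lam1 * (Ws1 i) ^ 2 / (2 * Ws i))
      ≤ ∑ i, (lam1 * Ws i - lam1 * (Ws i) ^ 2 / (2 * Ws i)) :=
    Finset.sum_le_sum fun i _ => mul_sub_mul_sq_div_two_mul_le (Ws1 i) (hWs i) hlam
  rw [Finset.sum_sub_distrib, Finset.sum_sub_distrib] at key
  linarith

theorem stmt_4 (m : ℕ) (Ws Ws1 : Fin m → ℝ) (Js Js1 lam1 : ℝ)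
    (hWs : ∀ i, 0 < Ws i) (hWs1 : ∀ i, 0 ≤ Ws1 i) (hlam : 0 ≤ lam1)
    (h : Js1 + ∑ i, lam1 * (Ws1 i) ^ 2 / (2 * Ws i)
        ≤ Js + ∑ i, lam1 * (Ws i) ^ 2 / (2 * Ws i)) :
    Js1 + ∑ i, lam1 * Ws1 i ≤ Js + ∑ i, lam1 * Ws i :=
  stmt_4_general m Ws Ws1 Js Js1 lam1 hWs hlam h
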